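/- Fix indices i ≠ l. Let τ_j ~ Bernoulli(p_j) be independent over j, and let the link indicators τ_{ij} ~ Bernoulli(p_{ij}) satisfy: τ_{ij} and τ_{lm} are independent unless {i,j} = {l,m}, with E[τ_{il}τ_{li}] = E_{il}; all link indicators are independent of all τ_j. Suppose the weights satisfy Σ_j p_j p_{ij} α_{ji} = 1 and Σ_m p_m p_{lm} α_{ml} = 1, with p_{ii} = p_{ll} = 1. Then E[(Σ_j τ_j τ_{ij} α_{ji} − 1)(Σ_m τ_m τ_{lm} α_{ml} − 1)] = Σ_j p_j(1−p_j)p_{ij}p_{lj}α_{ji}α_{jl} + p_i p_l (E_{il} − p_{il}p_{li}) α_{il}α_{li}. -/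
import Mathlib


open MeasureTheory Finset

lemma int01 {Ω : Type*} [MeasurableSpace Ω] (μ : Measure Ω) [IsProbabilityMeasure μ]
    (f : Ω → ℝ) (h : ∀ ω, f ω = 0 ∨ f ω = 1) (hm : Measurable f) : Integrable f μ := by
  apply Integrable.mono' (integrable_const (1:ℝ)) hm.aestronglyMeasurable
  filter_upwards with ω
  rcases h ω with h'|h' <;> simp [h']

lemma mul01 {Ω : Type*} (f g : Ω → ℝ) (hf : ∀ ω, f ω = 0 ∨ f ω = 1)
    (hg : ∀ ω, g ω = 0 ∨ g ω = 1) : ∀ ω, f ω * g ω = 0 ∨ f ω * g ω = 1 := by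
  intro ω
  rcases hf ω with h|h <;> rcases hg ω with h'|h' <;> simp [h, h']

/-- Covariance of the total received weights of two distinct clients `i ≠ l` at the
parameter server. `τ j` is the uplink Bernoulli(`p j`) indicator of client `j`,
`ti j = τ_{ij}` and `tl m = τ_{lm}` are the link indicators from clients `i` and `l`
(Bernoulli(`P i j`) resp. `P l m`), all mutually independent except for channel
reciprocity `E[τ_{il} τ_{li}] = Eil ≥ P i l * P l i`; `A j i = α_{ji}` are the
relaying weights satisfying the unbiasedness constraints. -/
theorem colrel_covariance
    {Ω : Type*} [MeasurableSpace Ω] (μ : Measure Ω) [IsProbabilityMeasure μ]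
    (n : ℕ) (i l : Fin n) (hil : i ≠ l)
    (τ ti tl : Fin n → Ω → ℝ) (p : Fin n → ℝ) (P : Fin n → Fin n → ℝ)
    (Eil : ℝ) (A : Matrix (Fin n) (Fin n) ℝ)
    (hτ01 : ∀ j ω, τ j ω = 0 ∨ τ j ω = 1)
    (hti01 : ∀ j ω, ti j ω = 0 ∨ ti j ω = 1)
    (htl01 : ∀ j ω, tl j ω = 0 ∨ tl j ω = 1)
    (hτm : ∀ j, Measurable (τ j)) (htim : ∀ j, Measurable (ti j))
    (htlm : ∀ j, Measurable (tl j))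
    (hτmean : ∀ j, ∫ ω, τ j ω ∂μ = p j)
    (htimean : ∀ j, ∫ ω, ti j ω ∂μ = P i j)
    (htlmean : ∀ m, ∫ ω, tl m ω ∂μ = P l m)
    (hPii : P i i = 1) (hPll : P l l = 1)
    (hpairi : ∀ j, ∫ ω, τ j ω * ti j ω ∂μ = p j * P i j)
    (hpairl : ∀ m, ∫ ω, τ m ω * tl m ω ∂μ = p m * P l m)
    (hdiag : ∀ j, ∫ ω, τ j ω * ti j ω * tl j ω ∂μ = p j * P i j * P l j)
    (hrecip : ∫ ω, τ l ω * τ i ω * ti l ω * tl i ω ∂μ = p l * p i * Eil)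
    (hoff : ∀ j m, j ≠ m → ¬(j = l ∧ m = i) →
      ∫ ω, τ j ω * τ m ω * ti j ω * tl m ω ∂μ = p j * p m * P i j * P l m)
    (hE : P i l * P l i ≤ Eil)
    (hA : ∀ j k, 0 ≤ A j k)
    (hsumi : ∑ j : Fin n, p j * P i j * A j i = 1)
    (hsuml : ∑ m : Fin n, p m * P l m * A m l = 1) :
    ∫ ω, ((∑ j : Fin n, τ j ω * ti j ω * A j i) - 1)
          * ((∑ m : Fin n, τ m ω * tl m ω * A m l) - 1) ∂μ
      = (∑ j : Fin n, p j * (1 - p j) * P i j * P l j * A j i * A j l)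
        + p i * p l * (Eil - P i l * P l i) * A i l * A l i := by
  -- basic 0/1 products
  have h2 : ∀ j, ∀ ω, τ j ω * ti j ω = 0 ∨ τ j ω * ti j ω = 1 :=
    fun j => mul01 _ _ (hτ01 j) (hti01 j)
  have h2l : ∀ m, ∀ ω, τ m ω * tl m ω = 0 ∨ τ m ω * tl m ω = 1 :=
    fun m => mul01 _ _ (hτ01 m) (htl01 m)
  have h4 : ∀ j m, ∀ ω, τ j ω * ti j ω * (τ m ω * tl m ω) = 0 ∨
      τ j ω * ti j ω * (τ m ω * tl m ω) = 1 :=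
    fun j m => mul01 _ _ (h2 j) (h2l m)
  -- integrability
  have intF1 : ∀ j, Integrable (fun ω => τ j ω * ti j ω * A j i) μ := fun j =>
    (int01 μ _ (h2 j) ((hτm j).mul (htim j))).mul_const _
  have intG1 : ∀ m, Integrable (fun ω => τ m ω * tl m ω * A m l) μ := fun m =>
    (int01 μ _ (h2l m) ((hτm m).mul (htlm m))).mul_const _
  have int4 : ∀ j m, Integrable
      (fun ω => τ j ω * ti j ω * (τ m ω * tl m ω) * (A j i * A m l)) μ := fun j m =>
    (int01 μ _ (h4 j m)
      (((hτm j).mul (htim j)).mul ((hτm m).mul (htlm m)))).mul_const _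
  -- value of each 4-fold integral
  have hval : ∀ j m, ∫ ω, τ j ω * ti j ω * (τ m ω * tl m ω) * (A j i * A m l) ∂μ
      = (p j * P i j * A j i) * (p m * P l m * A m l)
        + (if j = m then p j * (1 - p j) * P i j * P l j * A j i * A j l else 0)
        + (if j = l ∧ m = i then p i * p l * (Eil - P i l * P l i) * A i l * A l i else 0) := by
    intro j m
    by_cases hjm : j = m
    · subst hjm
      have hne : ¬ (j = l ∧ j = i) := by rintro ⟨rfl, rfl⟩; exact hil rfl
      have hpt : ∀ ω, τ j ω * ti j ω * (τ j ω * tl j ω) * (A j i * A j l)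
          = τ j ω * ti j ω * tl j ω * (A j i * A j l) := by
        intro ω; rcases hτ01 j ω with h|h <;> rw [h] <;> ring
      rw [show (fun ω => τ j ω * ti j ω * (τ j ω * tl j ω) * (A j i * A j l))
            = fun ω => τ j ω * ti j ω * tl j ω * (A j i * A j l) from funext hpt]
      rw [integral_mul_const, hdiag j, if_pos rfl, if_neg hne]
      ring
    · by_cases hli : j = l ∧ m = i
      · rw [hli.1, hli.2]
        have hpt : ∀ ω, τ l ω * ti l ω * (τ i ω * tl i ω) * (A l i * A i l)
            = τ l ω * τ i ω * ti l ω * tl i ω * (A l i * A i l) := by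
          intro ω; ring
        rw [show (fun ω => τ l ω * ti l ω * (τ i ω * tl i ω) * (A l i * A i l))
              = fun ω => τ l ω * τ i ω * ti l ω * tl i ω * (A l i * A i l) from funext hpt]
        rw [integral_mul_const, hrecip,
          if_neg (show (l : Fin n) ≠ i from fun h => hil h.symm),
          if_pos (⟨rfl, rfl⟩ : l = l ∧ i = i)]
        ring
      · have hpt : ∀ ω, τ j ω * ti j ω * (τ m ω * tl m ω) * (A j i * A m l)
            = τ j ω * τ m ω * ti j ω * tl m ω * (A j i * A m l) := by
          intro ω; ring
        rw [show (fun ω => τ j ω * ti j ω * (τ m ω * tl m ω) * (A j i * A m l))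
              = fun ω => τ j ω * τ m ω * ti j ω * tl m ω * (A j i * A m l) from funext hpt]
        rw [integral_mul_const, hoff j m hjm hli, if_neg hjm, if_neg hli]
        ring
  -- expand the integrand
  have hexp : ∀ ω, ((∑ j : Fin n, τ j ω * ti j ω * A j i) - 1)
          * ((∑ m : Fin n, τ m ω * tl m ω * A m l) - 1)
      = (∑ j : Fin n, ∑ m : Fin n,
          τ j ω * ti j ω * (τ m ω * tl m ω) * (A j i * A m l))
        - (∑ j : Fin n, τ j ω * ti j ω * A j i)
        - (∑ m : Fin n, τ m ω * tl m ω * A m l) + 1 := by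
    intro ω
    have : (∑ j : Fin n, τ j ω * ti j ω * A j i)
        * (∑ m : Fin n, τ m ω * tl m ω * A m l)
        = ∑ j : Fin n, ∑ m : Fin n,
            τ j ω * ti j ω * (τ m ω * tl m ω) * (A j i * A m l) := by
      rw [Finset.sum_mul_sum]
      exact Finset.sum_congr rfl fun j _ => Finset.sum_congr rfl fun m _ => by ring
    rw [← this]; ring
  simp only [hexp]
  have intX : Integrable (fun ω => ∑ j : Fin n, ∑ m : Fin n,
      τ j ω * ti j ω * (τ m ω * tl m ω) * (A j i * A m l)) μ :=
    integrable_finset_sum _ fun j _ => integrable_finset_sum _ fun m _ => int4 j m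
  have intF : Integrable (fun ω => ∑ j : Fin n, τ j ω * ti j ω * A j i) μ :=
    integrable_finset_sum _ fun j _ => intF1 j
  have intG : Integrable (fun ω => ∑ m : Fin n, τ m ω * tl m ω * A m l) μ :=
    integrable_finset_sum _ fun m _ => intG1 m
  have intXF : Integrable (fun ω => (∑ j : Fin n, ∑ m : Fin n,
      τ j ω * ti j ω * (τ m ω * tl m ω) * (A j i * A m l))
      - (∑ j : Fin n, τ j ω * ti j ω * A j i)) μ := intX.sub intF
  have intXFG : Integrable (fun ω => (∑ j : Fin n, ∑ m : Fin n,
      τ j ω * ti j ω * (τ m ω * tl m ω) * (A j i * A m l))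
      - (∑ j : Fin n, τ j ω * ti j ω * A j i)
      - (∑ m : Fin n, τ m ω * tl m ω * A m l)) μ := intXF.sub intG
  rw [integral_add intXFG (integrable_const 1),
      integral_sub intXF intG, integral_sub intX intF,
      integral_finset_sum _ (fun j _ => integrable_finset_sum _ fun m _ => int4 j m),
      integral_finset_sum _ (fun j _ => intF1 j),
      integral_finset_sum _ (fun m _ => intG1 m)]
  have hIF : (∑ j : Fin n, ∫ ω, τ j ω * ti j ω * A j i ∂μ) = 1 := by
    rw [← hsumi]
    exact Finset.sum_congr rfl fun j _ => by rw [integral_mul_const, hpairi j]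
  have hIG : (∑ m : Fin n, ∫ ω, τ m ω * tl m ω * A m l ∂μ) = 1 := by
    rw [← hsuml]
    exact Finset.sum_congr rfl fun m _ => by rw [integral_mul_const, hpairl m]
  have hXX : (∑ j : Fin n, ∑ m : Fin n,
      ∫ ω, τ j ω * ti j ω * (τ m ω * tl m ω) * (A j i * A m l) ∂μ)
      = 1 + (∑ j : Fin n, p j * (1 - p j) * P i j * P l j * A j i * A j l)
        + p i * p l * (Eil - P i l * P l i) * A i l * A l i := by
    simp only [hval]
    have hrow : ∀ j : Fin n, (∑ m : Fin n, ((p j * P i j * A j i) * (p m * P l m * A m l)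
          + (if j = m then p j * (1 - p j) * P i j * P l j * A j i * A j l else 0)
          + (if j = l ∧ m = i then p i * p l * (Eil - P i l * P l i) * A i l * A l i else 0)))
        = (p j * P i j * A j i) + p j * (1 - p j) * P i j * P l j * A j i * A j l
          + (if j = l then p i * p l * (Eil - P i l * P l i) * A i l * A l i else 0) := by
      intro j
      rw [Finset.sum_add_distrib, Finset.sum_add_distrib, ← Finset.mul_sum, hsuml, mul_one]
      by_cases hj : j = l <;> simp [hj]
    rw [Finset.sum_congr rfl fun j _ => hrow j, Finset.sum_add_distrib,
        Finset.sum_add_distrib, hsumi]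
    simp
  rw [hIF, hIG,
      Finset.sum_congr rfl (fun j _ => integral_finset_sum Finset.univ (fun m _ => int4 j m)),
      hXX, integral_const]
  simp
  ring
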